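/- Let w be a Schwarz function (analytic self-map of the unit disk with w(0) = 0), and let {φ_n(r)} be nonnegative continuous functions on [0,1) with Σ φ_n locally uniformly convergent. If r ∈ [0,1) satisfies φ_0(r) ≥ 2 Σ_{n≥1} (n+1) φ_n(r), then Σ_{n≥0} (n+1) |a_{n+1}| φ_n(r) ≤ φ_0(r), where w(z) = Σ_{n≥1} a_n z^n. -/

import Mathlib

open Filter Finset Metric Set ComplexConjugate Topology

/-! Dividing by `z`, the Schwarz function `w` becomes a self-map `dslope w 0` of the unit disk
with coefficients `a (k + 1)`, so it suffices to know Wiener's bound `‖cₙ‖ ≤ 1 - ‖c₀‖²` (`n ≥ 1`)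
for a self-map `f = ∑ cₖ zᵏ` of the disk. Averaging `f` over the rotations `z ↦ ζʲ z` by the
`n`-th roots of unity keeps only the coefficients `c (n * m)`, which gives a self-map
`χ(zⁿ) = ∑ c (n * m) z^(n m)` with `χ 0 = c₀` and `χ' 0 = cₙ`; the Schwarz–Pick bound
`‖χ' 0‖ ≤ 1 - ‖χ 0‖²` finishes. Since `1 - t² ≤ 2 (1 - t)`, the weighted sum is then at most
`|a₁| φ₀ + 2 (1 - |a₁|) ∑_{n ≥ 1} (n + 1) φₙ ≤ φ₀`. -/

theorem IsPrimitiveRoot.sum_pow_pow_eq_ite {K : Type*} [Field K] {n : ℕ} {ζ : K}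
    (hζ : IsPrimitiveRoot ζ n) (k : ℕ) :
    ∑ j ∈ range n, (ζ ^ k) ^ j = if n ∣ k then (n : K) else 0 := by
  split_ifs with h
  · simp [(hζ.pow_eq_one_iff_dvd k).2 h]
  · rw [geom_sum_eq (mt (hζ.pow_eq_one_iff_dvd k).1 h), ← pow_mul, mul_comm, pow_mul,
      hζ.pow_eq_one, one_pow, sub_self, zero_div]

namespace Complex

theorem norm_sub_le_norm_one_sub_conj_mul {d v : ℂ} (hd : ‖d‖ ≤ 1) (hv : ‖v‖ ≤ 1) :
    ‖v - d‖ ≤ ‖1 - conj d * v‖ := by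
  have key : ‖1 - conj d * v‖ ^ 2 - ‖v - d‖ ^ 2 = (1 - ‖d‖ ^ 2) * (1 - ‖v‖ ^ 2) := by
    simp only [← normSq_eq_norm_sq, normSq_apply, sub_re, sub_im, one_re, one_im, mul_re,
      mul_im, conj_re, conj_im]
    ring
  have : 0 ≤ (1 - ‖d‖ ^ 2) * (1 - ‖v‖ ^ 2) :=
    mul_nonneg (by nlinarith [norm_nonneg d]) (by nlinarith [norm_nonneg v])
  exact (sq_le_sq₀ (norm_nonneg _) (norm_nonneg _)).1 (by linarith)

theorem norm_deriv_le_one_sub_sq_of_norm_lt_one {g : ℂ → ℂ}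
    (hd : DifferentiableOn ℂ g (ball 0 1)) (hg : MapsTo g (ball 0 1) (closedBall 0 1))
    (hg₀ : ‖g 0‖ < 1) : ‖deriv g 0‖ ≤ 1 - ‖g 0‖ ^ 2 := by
  set d := g 0
  have hden : ∀ z ∈ ball (0 : ℂ) 1, 1 - conj d * g z ≠ 0 := fun z hz h ↦ by
    have : ‖conj d * g z‖ < 1 := by
      rw [norm_mul, norm_conj]
      exact mul_lt_one_of_nonneg_of_lt_one_left (norm_nonneg d) hg₀
        (mem_closedBall_zero_iff.1 (hg hz))
    rw [← sub_eq_zero.1 h, norm_one] at this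
    exact this.false
  set h : ℂ → ℂ := fun z ↦ (g z - d) / (1 - conj d * g z)
  have hh : DifferentiableOn ℂ h (ball 0 1) :=
    (hd.sub_const d).div ((differentiableOn_const 1).sub (hd.const_mul _)) hden
  have hh_maps : MapsTo h (ball 0 1) (closedBall (h 0) 1) := fun z hz ↦ by
    rw [show h 0 = 0 by simp [h, d], mem_closedBall_zero_iff, norm_div,
      div_le_one (norm_pos_iff.2 (hden z hz))]
    exact norm_sub_le_norm_one_sub_conj_mul hg₀.le (mem_closedBall_zero_iff.1 (hg hz))
  have hg' : HasDerivAt g (deriv g 0) 0 :=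
    (hd.differentiableAt (ball_mem_nhds 0 one_pos)).hasDerivAt
  have hh' : deriv h 0 = deriv g 0 / (1 - conj d * d) := by
    have hne : 1 - conj d * g 0 ≠ 0 := hden 0 (mem_ball_self one_pos)
    have := (hg'.sub_const d).fun_div ((hg'.const_mul (conj d)).const_sub 1) hne
    rw [this.deriv]
    simp only [d, sub_self, zero_mul, sub_zero] at hne ⊢
    field_simp
  have hnorm : ‖1 - conj d * d‖ = 1 - ‖d‖ ^ 2 := by
    rw [conj_mul', ← ofReal_pow, ← ofReal_one, ← ofReal_sub, norm_real,
      Real.norm_of_nonneg (by nlinarith [norm_nonneg d])]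
  have := norm_deriv_le_one_of_mapsTo_ball hh hh_maps one_pos
  rwa [hh', norm_div, hnorm, div_le_one (by nlinarith [norm_nonneg d])] at this

/-- The case `‖g 0‖ = 1` follows from the strict one applied to `t • g` by letting `t → 1⁻`. -/
theorem norm_deriv_le_one_sub_sq {g : ℂ → ℂ}
    (hd : DifferentiableOn ℂ g (ball 0 1)) (hg : MapsTo g (ball 0 1) (closedBall 0 1)) :
    ‖deriv g 0‖ ≤ 1 - ‖g 0‖ ^ 2 := by
  have hscaled : ∀ t ∈ Ioo (0 : ℝ) 1, t * ‖deriv g 0‖ ≤ 1 - t ^ 2 * ‖g 0‖ ^ 2 := by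
    rintro t ⟨ht₀, ht₁⟩
    have hnorm : ∀ z ∈ ball (0 : ℂ) 1, ‖(t : ℂ) * g z‖ ≤ t := fun z hz ↦ by
      rw [norm_mul, norm_real, Real.norm_of_nonneg ht₀.le]
      exact mul_le_of_le_one_right ht₀.le (mem_closedBall_zero_iff.1 (hg hz))
    have := norm_deriv_le_one_sub_sq_of_norm_lt_one (hd.const_mul (t : ℂ))
      (fun z hz ↦ mem_closedBall_zero_iff.2 ((hnorm z hz).trans ht₁.le))
      ((hnorm 0 (mem_ball_self one_pos)).trans_lt ht₁)
    rwa [deriv_const_mul _ (hd.differentiableAt (ball_mem_nhds 0 one_pos)), norm_mul, norm_mul,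
      norm_real, Real.norm_of_nonneg ht₀.le, mul_pow] at this
  have hlim : ∀ F : ℝ → ℝ, Continuous F → Tendsto F (𝓝[<] 1) (𝓝 (F 1)) := fun F hF ↦
    (hF.tendsto 1).mono_left nhdsWithin_le_nhds
  simpa using le_of_tendsto_of_tendsto (hlim _ (by fun_prop)) (hlim _ (by fun_prop))
    (eventually_of_mem (Ioo_mem_nhdsLT zero_lt_one) hscaled)

end Complex

section UnitDiskSeries

variable {c : ℕ → ℂ} {f : ℂ → ℂ}

theorem hasFPowerSeriesOnBall_ofScalars_of_hasSum
    (hf : ∀ z : ℂ, ‖z‖ < 1 → HasSum (fun k ↦ c k * z ^ k) (f z)) :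
    HasFPowerSeriesOnBall f (FormalMultilinearSeries.ofScalars ℂ c) 0 1 where
  r_le := by
    refine ENNReal.le_of_forall_nnreal_lt fun s hs ↦ ?_
    apply FormalMultilinearSeries.le_radius_of_summable
    simpa [FormalMultilinearSeries.ofScalars_norm, norm_mul, norm_pow] using
      (hf s (by simpa using hs)).summable.norm
  r_pos := one_pos
  hasSum {y} hy := by
    rw [← ENNReal.coe_one, eball_coe, NNReal.coe_one, mem_ball_zero_iff] at hy
    simpa [FormalMultilinearSeries.ofScalars_apply_eq, mul_comm] using hf y hy

theorem differentiableOn_ball_of_hasSum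
    (hf : ∀ z : ℂ, ‖z‖ < 1 → HasSum (fun k ↦ c k * z ^ k) (f z)) :
    DifferentiableOn ℂ f (ball 0 1) := by
  have := (hasFPowerSeriesOnBall_ofScalars_of_hasSum hf).differentiableOn
  rwa [← ENNReal.coe_one, eball_coe, NNReal.coe_one] at this

theorem hasDerivAt_zero_of_hasSum
    (hf : ∀ z : ℂ, ‖z‖ < 1 → HasSum (fun k ↦ c k * z ^ k) (f z)) :
    HasDerivAt f (c 1) 0 := by
  simpa [FormalMultilinearSeries.ofScalars_apply_eq] using
    (hasFPowerSeriesOnBall_ofScalars_of_hasSum hf).hasFPowerSeriesAt.hasDerivAt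

theorem eq_coeff_zero_of_hasSum
    (hf : ∀ z : ℂ, ‖z‖ < 1 → HasSum (fun k ↦ c k * z ^ k) (f z)) : f 0 = c 0 := by
  have h₀ : HasSum (fun k ↦ c k * (0 : ℂ) ^ k) (c 0 * 0 ^ 0) :=
    hasSum_single 0 fun k hk ↦ by simp [hk]
  simpa using (hf 0 (by simp)).unique h₀

theorem hasSum_dslope_zero_of_hasSum
    (hf : ∀ z : ℂ, ‖z‖ < 1 → HasSum (fun k ↦ c k * z ^ k) (f z)) {z : ℂ} (hz : ‖z‖ < 1) :
    HasSum (fun k ↦ c (k + 1) * z ^ k) (dslope f 0 z) := by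
  rcases eq_or_ne z 0 with rfl | hz₀
  · have h₀ : HasSum (fun k ↦ c (k + 1) * (0 : ℂ) ^ k) (c 1 * 0 ^ 0) :=
      hasSum_single 0 fun k hk ↦ by simp [hk]
    simpa [(hasDerivAt_zero_of_hasSum hf).deriv] using h₀
  · have htail := ((hasSum_nat_add_iff' 1).2 (hf z hz)).div_const z
    rw [dslope_of_ne _ hz₀, slope_def_field, eq_coeff_zero_of_hasSum hf, sub_zero]
    rw [Finset.sum_range_one, pow_zero, mul_one] at htail
    refine htail.congr_fun fun k ↦ ?_
    rw [pow_succ, ← mul_assoc, mul_div_cancel_right₀ _ hz₀]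

theorem hasSum_ite_dvd_of_hasSum
    (hf : ∀ z : ℂ, ‖z‖ < 1 → HasSum (fun k ↦ c k * z ^ k) (f z))
    {n : ℕ} (hn : n ≠ 0) {ζ : ℂ} (hζ : IsPrimitiveRoot ζ n) {z : ℂ} (hz : ‖z‖ < 1) :
    HasSum (fun k ↦ if n ∣ k then c k * z ^ k else 0)
      ((n : ℂ)⁻¹ * ∑ j ∈ range n, f (ζ ^ j * z)) := by
  have hrot : ∀ j : ℕ, ‖ζ ^ j * z‖ < 1 := fun j ↦ by
    rwa [norm_mul, norm_pow, hζ.norm'_eq_one hn, one_pow, one_mul]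
  have hsum := (hasSum_sum (s := range n) fun j _ ↦ hf _ (hrot j)).mul_left (n : ℂ)⁻¹
  refine hsum.congr_fun fun k ↦ ?_
  have hterm : ∀ j : ℕ, c k * (ζ ^ j * z) ^ k = (ζ ^ k) ^ j * (c k * z ^ k) := fun j ↦ by
    rw [mul_pow, ← pow_mul, ← pow_mul, mul_comm j k]; ring
  simp_rw [hterm, ← Finset.sum_mul, hζ.sum_pow_pow_eq_ite k]
  split_ifs <;> simp [hn]

theorem exists_hasSum_coeff_mul_pow_of_mapsTo
    (hf : ∀ z : ℂ, ‖z‖ < 1 → HasSum (fun k ↦ c k * z ^ k) (f z))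
    (hf_maps : MapsTo f (ball 0 1) (closedBall 0 1)) {n : ℕ} (hn : n ≠ 0) {u : ℂ}
    (hu : ‖u‖ < 1) : ∃ S, ‖S‖ ≤ 1 ∧ HasSum (fun m ↦ c (n * m) * u ^ m) S := by
  obtain ⟨z, rfl⟩ := IsAlgClosed.exists_pow_nat_eq u (Nat.pos_of_ne_zero hn)
  have hz : ‖z‖ < 1 := by
    rw [norm_pow] at hu
    exact (pow_lt_one_iff_of_nonneg (norm_nonneg z) hn).1 hu
  obtain ⟨ζ, hζ⟩ : ∃ ζ : ℂ, IsPrimitiveRoot ζ n := ⟨_, Complex.isPrimitiveRoot_exp n hn⟩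
  refine ⟨(n : ℂ)⁻¹ * ∑ j ∈ range n, f (ζ ^ j * z), ?_, ?_⟩
  · have hrot : ∀ j : ℕ, ζ ^ j * z ∈ ball (0 : ℂ) 1 := fun j ↦ by
      simpa [hζ.norm'_eq_one hn] using hz
    have hnorm_sum : ‖∑ j ∈ range n, f (ζ ^ j * z)‖ ≤ n :=
      (norm_sum_le _ _).trans <| by
        simpa using Finset.sum_le_sum fun j (_ : j ∈ range n) ↦
          mem_closedBall_zero_iff.1 (hf_maps (hrot j))
    rw [norm_mul, norm_inv, Complex.norm_natCast]
    exact inv_mul_le_one_of_le₀ hnorm_sum (Nat.cast_nonneg n)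
  · have hsum := (mul_right_injective₀ hn).hasSum_iff
      (fun k hk ↦ if_neg fun ⟨m, hm⟩ ↦ hk ⟨m, hm.symm⟩) |>.2
      (hasSum_ite_dvd_of_hasSum hf hn hζ hz)
    exact hsum.congr_fun fun m ↦ by simp [pow_mul]

theorem norm_coeff_zero_le_one_of_mapsTo
    (hf : ∀ z : ℂ, ‖z‖ < 1 → HasSum (fun k ↦ c k * z ^ k) (f z))
    (hf_maps : MapsTo f (ball 0 1) (closedBall 0 1)) : ‖c 0‖ ≤ 1 :=
  eq_coeff_zero_of_hasSum hf ▸ mem_closedBall_zero_iff.1 (hf_maps (mem_ball_self one_pos))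

theorem norm_coeff_le_one_sub_sq_of_mapsTo
    (hf : ∀ z : ℂ, ‖z‖ < 1 → HasSum (fun k ↦ c k * z ^ k) (f z))
    (hf_maps : MapsTo f (ball 0 1) (closedBall 0 1)) {n : ℕ} (hn : n ≠ 0) :
    ‖c n‖ ≤ 1 - ‖c 0‖ ^ 2 := by
  set χ : ℂ → ℂ := fun u ↦ ∑' m, c (n * m) * u ^ m
  have hχ : ∀ u : ℂ, ‖u‖ < 1 → HasSum (fun m ↦ c (n * m) * u ^ m) (χ u) ∧ ‖χ u‖ ≤ 1 :=
    fun u hu ↦ by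
      obtain ⟨S, hS, hsum⟩ := exists_hasSum_coeff_mul_pow_of_mapsTo hf hf_maps hn hu
      rw [show χ u = S from hsum.tsum_eq]
      exact ⟨hsum, hS⟩
  have hχ_sum := fun u hu ↦ (hχ u hu).1
  have := Complex.norm_deriv_le_one_sub_sq (differentiableOn_ball_of_hasSum hχ_sum)
    fun u hu ↦ mem_closedBall_zero_iff.2 (hχ u (mem_ball_zero_iff.1 hu)).2
  rwa [(hasDerivAt_zero_of_hasSum hχ_sum).deriv, eq_coeff_zero_of_hasSum hχ_sum, mul_one,
    mul_zero] at this

end UnitDiskSeries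

theorem tsum_succ_mul_mul_le_of_le_two_mul_one_sub {b ψ : ℕ → ℝ} (hb : ∀ n, 0 ≤ b n)
    (hb₀ : b 0 ≤ 1) (hbn : ∀ n, b (n + 1) ≤ 2 * (1 - b 0)) (hψ : ∀ n, 0 ≤ ψ n)
    (hsum : Summable fun n : ℕ ↦ ((n : ℝ) + 2) * ψ (n + 1))
    (hcond : 2 * ∑' n : ℕ, ((n : ℝ) + 2) * ψ (n + 1) ≤ ψ 0) :
    ∑' n : ℕ, ((n : ℝ) + 1) * b n * ψ n ≤ ψ 0 := by
  set S := ∑' n : ℕ, ((n : ℝ) + 2) * ψ (n + 1)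
  have hterm : ∀ n : ℕ, (((n + 1 : ℕ) : ℝ) + 1) * b (n + 1) * ψ (n + 1)
      ≤ 2 * (1 - b 0) * (((n : ℝ) + 2) * ψ (n + 1)) := fun n ↦ by
    have := mul_le_mul_of_nonneg_right (hbn n) (mul_nonneg (by positivity : (0 : ℝ) ≤ n + 2)
      (hψ (n + 1)))
    push_cast
    linarith
  have htail : Summable fun n : ℕ ↦ (((n + 1 : ℕ) : ℝ) + 1) * b (n + 1) * ψ (n + 1) :=
    (hsum.mul_left _).of_nonneg_of_le (fun n ↦ mul_nonneg (mul_nonneg (by positivity)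
      (hb (n + 1))) (hψ (n + 1))) hterm
  have htail_le : ∑' n : ℕ, (((n + 1 : ℕ) : ℝ) + 1) * b (n + 1) * ψ (n + 1)
      ≤ 2 * (1 - b 0) * S :=
    (htail.tsum_le_tsum hterm (hsum.mul_left _)).trans_eq tsum_mul_left
  have hsumm : Summable fun n : ℕ ↦ ((n : ℝ) + 1) * b n * ψ n :=
    (summable_nat_add_iff (f := fun n : ℕ ↦ ((n : ℝ) + 1) * b n * ψ n) 1).1 htail
  rw [hsumm.tsum_eq_zero_add, Nat.cast_zero, zero_add, one_mul]
  linarith [mul_le_mul_of_nonneg_left hcond (sub_nonneg.2 hb₀)]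

theorem weighted_bohr_schwarz_derivative_general (w : ℂ → ℂ) (a : ℕ → ℂ) (φ : ℕ → ℝ → ℝ)
    (hw : ∀ z : ℂ, ‖z‖ < 1 → HasSum (fun n : ℕ => a n * z ^ n) (w z))
    (hb : ∀ z : ℂ, ‖z‖ < 1 → ‖w z‖ ≤ 1)
    (hw0 : w 0 = 0)
    (hφ0 : ∀ n : ℕ, ∀ x : ℝ, 0 ≤ x → x < 1 → 0 ≤ φ n x)
    (r : ℝ) (hr0 : 0 ≤ r) (hr : r < 1)
    (hsum : Summable fun n : ℕ => ((n : ℝ) + 2) * φ (n + 1) r)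
    (hcond : φ 0 r ≥ 2 * ∑' n : ℕ, ((n : ℝ) + 2) * φ (n + 1) r) :
    ∑' n : ℕ, ((n : ℝ) + 1) * ‖a (n + 1)‖ * φ n r ≤ φ 0 r := by
  have hw_maps : MapsTo w (ball 0 1) (closedBall (w 0) 1) := fun z hz ↦ by
    simpa [hw0] using hb z (mem_ball_zero_iff.1 hz)
  have hslope_sum := fun z (hz : ‖z‖ < 1) ↦ hasSum_dslope_zero_of_hasSum hw hz
  have hslope_maps : MapsTo (dslope w 0) (ball 0 1) (closedBall 0 1) := fun z hz ↦ by
    simpa using Complex.norm_dslope_le_div_of_mapsTo_ball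
      (differentiableOn_ball_of_hasSum hw) hw_maps hz
  have ha₁ : ‖a 1‖ ≤ 1 := norm_coeff_zero_le_one_of_mapsTo hslope_sum hslope_maps
  refine tsum_succ_mul_mul_le_of_le_two_mul_one_sub (fun n ↦ norm_nonneg _) ha₁ (fun n ↦ ?_)
    (fun n ↦ hφ0 n r hr0 hr) hsum hcond
  have hwiener := norm_coeff_le_one_sub_sq_of_mapsTo hslope_sum hslope_maps n.succ_ne_zero
  nlinarith [norm_nonneg (a 1)]

/-- Weighted Bohr inequality for the derivative of a Schwarz function
(Theorem 6.1): if `w` is a Schwarz function with coefficients `aₙ` and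
`φ₀(r) ≥ 2 Σ_{n≥1} (n+1) φₙ(r)`, then `Σ_{n≥0} (n+1)|a_{n+1}| φₙ(r) ≤ φ₀(r)`. -/
theorem weighted_bohr_schwarz_derivative (w : ℂ → ℂ) (a : ℕ → ℂ) (φ : ℕ → ℝ → ℝ)
    (hw : ∀ z : ℂ, ‖z‖ < 1 → HasSum (fun n : ℕ => a n * z ^ n) (w z))
    (hb : ∀ z : ℂ, ‖z‖ < 1 → ‖w z‖ ≤ 1)
    (ha0 : a 0 = 0) (hw0 : w 0 = 0)
    (hφ0 : ∀ n : ℕ, ∀ x : ℝ, 0 ≤ x → x < 1 → 0 ≤ φ n x)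
    (hφc : ∀ n : ℕ, ContinuousOn (φ n) (Set.Ico 0 1))
    (hφu : TendstoLocallyUniformlyOn
      (fun (N : ℕ) (x : ℝ) => ∑ n ∈ Finset.range N, φ n x)
      (fun x => ∑' n : ℕ, φ n x) atTop (Set.Ico (0 : ℝ) 1))
    (r : ℝ) (hr0 : 0 ≤ r) (hr : r < 1)
    (hsum : Summable fun n : ℕ => ((n : ℝ) + 2) * φ (n + 1) r)
    (hcond : φ 0 r ≥ 2 * ∑' n : ℕ, ((n : ℝ) + 2) * φ (n + 1) r) :
    ∑' n : ℕ, ((n : ℝ) + 1) * ‖a (n + 1)‖ * φ n r ≤ φ 0 r :=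
  weighted_bohr_schwarz_derivative_general w a φ hw hb hw0 hφ0 r hr0 hr hsum hcond
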